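/- The kernel of the group homomorphism U(Z(A)) → U(H,A), c ↦ ĉ with ĉ(g) = (g ▷ c⁻¹)c, is exactly the set of H-invariant unitary central elements U(Z(A))^H = {c ∈ U(Z(A)) : g ▷ c = ε(g)c for all g ∈ H}, and the image of this homomorphism is contained in the center of U(H,A). -/
import Mathlib


variable {C : Type*} [CommRing C] [StarRing C]
variable {H : Type*} [Ring H] [HopfAlgebra C H] [StarRing H] [StarModule C H]
variable {A : Type*} [Ring A] [StarRing A] [Algebra C A] [StarModule C A]

open TensorProduct in
/-- `SwRep g g1 g2` states that `Δ(g) = ∑ i, g1 i ⊗ g2 i`, i.e. `(g1, g2)` is a Sweedler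
representation of the comultiplication of `g`. -/
def SwRep {C : Type*} [CommRing C] {H : Type*} [Ring H] [HopfAlgebra C H]
    (g : H) {n : ℕ} (g1 g2 : Fin n → H) : Prop :=
  Coalgebra.comul (R := C) g = ∑ i, g1 i ⊗ₜ[C] g2 i

/-- `H` is a Hopf `*`-algebra: comultiplication and counit are `*`-homomorphisms. -/
def IsHopfStar (C H : Type*) [CommRing C] [StarRing C] [Ring H] [HopfAlgebra C H]
    [StarRing H] [StarModule C H] : Prop :=
  (∀ g : H, Coalgebra.counit (R := C) (star g) = star (Coalgebra.counit (R := C) g)) ∧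
  (∀ (g : H) (n : ℕ) (g1 g2 : Fin n → H), SwRep (C := C) g g1 g2 →
      SwRep (C := C) (star g) (fun i => star (g1 i)) (fun i => star (g2 i)))

/-- A left `*`-action of the Hopf `*`-algebra `H` on the `*`-algebra `A`:
`g ▷ (ab) = (g₍₁₎ ▷ a)(g₍₂₎ ▷ b)`, `g ▷ 1 = ε(g)1`, `(g ▷ a)* = S(g)* ▷ a*`. -/
structure StarAction (C H A : Type*) [CommRing C] [StarRing C] [Ring H] [HopfAlgebra C H]
    [StarRing H] [StarModule C H] [Ring A] [StarRing A] [Algebra C A] [StarModule C A] where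
  act : H →ₗ[C] A →ₗ[C] A
  act_one : ∀ a : A, act 1 a = a
  act_mul : ∀ (g h : H) (a : A), act (g * h) a = act g (act h a)
  act_ab : ∀ (g : H) (a b : A) (n : ℕ) (g1 g2 : Fin n → H), SwRep (C := C) g g1 g2 →
      act g (a * b) = ∑ i, act (g1 i) a * act (g2 i) b
  act_unit : ∀ g : H, act g 1 = Coalgebra.counit (R := C) g • (1 : A)
  act_star : ∀ (g : H) (a : A), star (act g a) =
      act (star (HopfAlgebra.antipode (R := C) g)) (star a)

/-- The convolution product on `Hom_C(H,A)`: `(f * h)(g) = f(g₍₁₎)h(g₍₂₎)`. -/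
noncomputable def conv (f h : H →ₗ[C] A) : H →ₗ[C] A :=
  (TensorProduct.lift ((LinearMap.mul C A).compl₁₂ f h)).comp (Coalgebra.comul)

/-- The convolution unit `ê(g) = ε(g)1_A`. -/
noncomputable def convUnit : H →ₗ[C] A := (Algebra.linearMap C A).comp (Coalgebra.counit)

/-- The set `GL(H,A)` of cocycles: `â(1)=1`, `â(gh) = â(g₍₁₎)(g₍₂₎ ▷ â(h))`, and
`(g₍₁₎ ▷ b)â(g₍₂₎) = â(g₍₁₎)(g₍₂₎ ▷ b)`. -/
def GLset (α : StarAction C H A) : Set (H →ₗ[C] A) :=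
  {f | f 1 = 1 ∧
    (∀ (g h : H) (n : ℕ) (g1 g2 : Fin n → H), SwRep (C := C) g g1 g2 →
        f (g * h) = ∑ i, f (g1 i) * α.act (g2 i) (f h)) ∧
    (∀ (g : H) (b : A) (n : ℕ) (g1 g2 : Fin n → H), SwRep (C := C) g g1 g2 →
        ∑ i, α.act (g1 i) b * f (g2 i) = ∑ i, f (g1 i) * α.act (g2 i) b)}

/-- The subset `U(H,A) ⊆ GL(H,A)` of unitary cocycles:
`â(g₍₁₎)(â(S(g₍₂₎)*))* = ε(g)1`. -/
def Uset (α : StarAction C H A) : Set (H →ₗ[C] A) :=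
  {f | f ∈ GLset α ∧
    ∀ (g : H) (n : ℕ) (g1 g2 : Fin n → H), SwRep (C := C) g g1 g2 →
      ∑ i, f (g1 i) * star (f (star (HopfAlgebra.antipode (R := C) (g2 i)))) =
        Coalgebra.counit (R := C) g • (1 : A)}

/-- A unitary central element of `A`. -/
def IsUnitaryCentral (c : A) : Prop :=
  (∀ a : A, a * c = c * a) ∧ star c * c = 1 ∧ c * star c = 1

/-- `ĉ(g) = (g ▷ c⁻¹)c = (g ▷ c*)c` for a unitary central `c`. -/
noncomputable def hatc (α : StarAction C H A) (c : A) : H →ₗ[C] A :=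
  (LinearMap.mulRight C c).comp (α.act.flip (star c))

open TensorProduct in
lemma exists_swRep (g : H) : ∃ (n : ℕ) (g1 g2 : Fin n → H), SwRep (C := C) g g1 g2 := by
  obtain ⟨S, hS⟩ := TensorProduct.exists_finset (R := C) (Coalgebra.comul g)
  refine ⟨S.card, fun i => (S.equivFin.symm i).1.1, fun i => (S.equivFin.symm i).1.2, ?_⟩
  unfold SwRep
  rw [hS, ← Finset.sum_attach S (fun p => p.1 ⊗ₜ[C] p.2)]
  exact (Equiv.sum_comp S.equivFin.symm fun p => (p : H × H).1 ⊗ₜ[C] (p : H × H).2).symm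

lemma swRep_counit_left {g : H} {n : ℕ} {g1 g2 : Fin n → H} (hg : SwRep (C := C) g g1 g2) :
    ∑ i, Coalgebra.counit (R := C) (g1 i) • g2 i = g := by
  have h1 : Coalgebra.comul (R := C) g = ∑ i, g1 i ⊗ₜ[C] g2 i := hg
  have h2 := Coalgebra.rTensor_counit_comul (R := C) g
  rw [h1, map_sum] at h2
  have h3 := congrArg (TensorProduct.lid C H) h2
  simpa using h3

lemma swRep_counit_right {g : H} {n : ℕ} {g1 g2 : Fin n → H} (hg : SwRep (C := C) g g1 g2) :
    ∑ i, Coalgebra.counit (R := C) (g2 i) • g1 i = g := by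
  have h1 : Coalgebra.comul (R := C) g = ∑ i, g1 i ⊗ₜ[C] g2 i := hg
  have h2 := Coalgebra.lTensor_counit_comul (R := C) g
  rw [h1, map_sum] at h2
  have h3 := congrArg (TensorProduct.rid C H) h2
  simpa using h3

lemma conv_apply_swRep (f h : H →ₗ[C] A) {g : H} {n : ℕ} {g1 g2 : Fin n → H}
    (hg : SwRep (C := C) g g1 g2) :
    conv f h g = ∑ i, f (g1 i) * h (g2 i) := by
  have h1 : Coalgebra.comul (R := C) g = ∑ i, g1 i ⊗ₜ[C] g2 i := hg
  simp [conv, h1]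

lemma hatc_apply (α : StarAction C H A) (c : A) (g : H) :
    hatc α c g = α.act g (star c) * c := by
  simp [hatc]

lemma convUnit_apply (g : H) :
    (convUnit : H →ₗ[C] A) g = Coalgebra.counit (R := C) g • (1 : A) := by
  simp [convUnit, Algebra.algebraMap_eq_smul_one]

/-- The kernel of `c ↦ ĉ` consists exactly of the `H`-invariant unitary central elements
(`g ▷ c = ε(g)c`), and its image is central in `U(H,A)`. -/
theorem hatc_kernel_and_central (hH : IsHopfStar C H) (α : StarAction C H A) :
    ∀ c : A, IsUnitaryCentral c →
      ((hatc α c = convUnit ↔ ∀ g : H, α.act g c = Coalgebra.counit (R := C) g • c) ∧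
        ∀ f ∈ Uset α, conv (hatc α c) f = conv f (hatc α c)) := by
  intro c hc
  obtain ⟨hcen, hsc, hcs⟩ := hc
  constructor
  · constructor
    · -- forward: kernel ⇒ invariant
      intro hk g
      -- from hk : act g (c*) * c = ε g • 1, get act g (c*) = ε g • c*
      have h2 : ∀ g : H, α.act g (star c) = Coalgebra.counit (R := C) g • star c := by
        intro g
        have h1 : α.act g (star c) * c = Coalgebra.counit (R := C) g • (1 : A) := by
          have := congrArg (fun f : H →ₗ[C] A => f g) hk
          simpa [hatc_apply, convUnit_apply] using this
        calc α.act g (star c) = α.act g (star c) * (c * star c) := by rw [hcs, mul_one]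
          _ = (α.act g (star c) * c) * star c := by rw [mul_assoc]
          _ = Coalgebra.counit (R := C) g • star c := by rw [h1, smul_mul_assoc, one_mul]
      obtain ⟨n, g1, g2, hg⟩ := exists_swRep (C := C) g
      have key : α.act g c * star c = Coalgebra.counit (R := C) g • (1 : A) := by
        have e1 : α.act g (c * star c) = Coalgebra.counit (R := C) g • (1 : A) := by
          rw [hcs, α.act_unit]
        rw [α.act_ab g c (star c) n g1 g2 hg] at e1
        have e2 : ∀ i, α.act (g1 i) c * α.act (g2 i) (star c)
            = (Coalgebra.counit (R := C) (g2 i) • α.act (g1 i) c) * star c := by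
          intro i
          rw [h2, smul_mul_assoc]
          rw [mul_smul_comm]
        rw [Finset.sum_congr rfl (fun i _ => e2 i), ← Finset.sum_mul] at e1
        have e3 : ∑ i, Coalgebra.counit (R := C) (g2 i) • α.act (g1 i) c = α.act g c := by
          rw [← swRep_counit_right (C := C) hg]
          simp [map_sum]
        rwa [e3] at e1
      calc α.act g c = α.act g c * (star c * c) := by rw [hsc, mul_one]
        _ = (α.act g c * star c) * c := by rw [mul_assoc]
        _ = Coalgebra.counit (R := C) g • c := by rw [key, smul_mul_assoc, one_mul]
    · -- backward: invariant ⇒ kernel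
      intro hinv
      ext g
      rw [hatc_apply, convUnit_apply]
      obtain ⟨n, g1, g2, hg⟩ := exists_swRep (C := C) g
      have key : c * α.act g (star c) = Coalgebra.counit (R := C) g • (1 : A) := by
        have e1 : α.act g (c * star c) = Coalgebra.counit (R := C) g • (1 : A) := by
          rw [hcs, α.act_unit]
        rw [α.act_ab g c (star c) n g1 g2 hg] at e1
        have e2 : ∀ i, α.act (g1 i) c * α.act (g2 i) (star c)
            = c * (Coalgebra.counit (R := C) (g1 i) • α.act (g2 i) (star c)) := by
          intro i
          rw [hinv, smul_mul_assoc, mul_smul_comm]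
        rw [Finset.sum_congr rfl (fun i _ => e2 i), ← Finset.mul_sum] at e1
        have e3 : ∑ i, Coalgebra.counit (R := C) (g1 i) • α.act (g2 i) (star c)
            = α.act g (star c) := by
          rw [← swRep_counit_left (C := C) hg]
          simp [map_sum]
        rwa [e3] at e1
      have h4 : α.act g (star c) = Coalgebra.counit (R := C) g • star c := by
        calc α.act g (star c) = (star c * c) * α.act g (star c) := by rw [hsc, one_mul]
          _ = star c * (c * α.act g (star c)) := by rw [mul_assoc]
          _ = Coalgebra.counit (R := C) g • star c := by rw [key, mul_smul_comm, mul_one]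
      rw [h4, smul_mul_assoc, hsc]
  · -- centrality
    intro f hf
    ext g
    obtain ⟨n, g1, g2, hg⟩ := exists_swRep (C := C) g
    rw [conv_apply_swRep _ _ hg, conv_apply_swRep _ _ hg]
    have cocycle := hf.1.2.2 g (star c) n g1 g2 hg
    calc ∑ i, hatc α c (g1 i) * f (g2 i)
        = (∑ i, α.act (g1 i) (star c) * f (g2 i)) * c := by
          rw [Finset.sum_mul]
          refine Finset.sum_congr rfl fun i _ => ?_
          rw [hatc_apply, mul_assoc, ← hcen (f (g2 i)), mul_assoc]
      _ = (∑ i, f (g1 i) * α.act (g2 i) (star c)) * c := by rw [cocycle]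
      _ = ∑ i, f (g1 i) * hatc α c (g2 i) := by
          rw [Finset.sum_mul]
          refine Finset.sum_congr rfl fun i _ => ?_
          rw [hatc_apply, mul_assoc]
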